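/- arXiv:2406.14219 — 17 statements merged into one kernel-verified Lean document; each statement's English description precedes it below -/
import Mathlib

section
/- For positive reals a, b, c, d with ab + bc + cd + da = 1, we have a^3/(b+c+d) + b^3/(c+d+a) + c^3/(d+a+b) + d^3/(a+b+c) ≥ 1/3. -/
lemma key_aux (a x : ℝ) (ha : 0 < a) (hx : 0 < x) :
    a^3/x ≥ 2/3*a^2 - 1/9*(a*x) := by
  rw [ge_iff_le, le_div_iff₀ hx]
  nlinarith [mul_nonneg ha.le (sq_nonneg (a - x/3))]

theorem stmt_0 (a b c d : ℝ) (ha : 0 < a) (hb : 0 < b) (hc : 0 < c) (hd : 0 < d)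
    (h : a*b + b*c + c*d + d*a = 1) :
    a^3/(b+c+d) + b^3/(c+d+a) + c^3/(d+a+b) + d^3/(a+b+c) ≥ 1/3 := by
  have h1 := key_aux a (b+c+d) ha (by linarith)
  have h2 := key_aux b (c+d+a) hb (by linarith)
  have h3 := key_aux c (d+a+b) hc (by linarith)
  have h4 := key_aux d (a+b+c) hd (by linarith)
  nlinarith [sq_nonneg (a-b), sq_nonneg (b-c), sq_nonneg (c-d), sq_nonneg (d-a),
    sq_nonneg (a-c), sq_nonneg (b-d)]
end

section
/- For positive reals a, b, c, d, a/(b+2c+3d) + b/(3a+c+2d) + c/(2a+3b+d) + d/(a+2b+3c) ≥ 2/3. -/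
theorem stmt_1 (a b c d : ℝ) (ha : 0 < a) (hb : 0 < b) (hc : 0 < c) (hd : 0 < d) :
    a/(b+2*c+3*d) + b/(3*a+c+2*d) + c/(2*a+3*b+d) + d/(a+2*b+3*c) ≥ 2/3 := by
  set S : ℝ := a*b+a*c+a*d+b*c+b*d+c*d with hS
  have hSpos : 0 < S := by positivity
  have ht : 0 < a+b+c+d := by linarith
  set k : ℝ := (a+b+c+d)/(4*S) with hk
  have hkpos : 0 < k := by positivity
  -- key bound for each term
  have key : ∀ x y : ℝ, 0 < x → 0 < y → x/y ≥ 2*k*x - k^2*(x*y) := by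
    intro x y hx hy
    rw [ge_iff_le, ← sub_nonneg]
    have h : x/y - (2*k*x - k^2*(x*y)) = x*(1 - k*y)^2/y := by
      field_simp; ring
    rw [h]
    positivity
  have h1 := key a (b+2*c+3*d) ha (by linarith)
  have h2 := key b (3*a+c+2*d) hb (by linarith)
  have h3 := key c (2*a+3*b+d) hc (by linarith)
  have h4 := key d (a+2*b+3*c) hd (by linarith)
  have hsum : a/(b+2*c+3*d) + b/(3*a+c+2*d) + c/(2*a+3*b+d) + d/(a+2*b+3*c)
      ≥ 2*k*(a+b+c+d) - k^2*(4*S) := by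
    have : a*(b+2*c+3*d) + b*(3*a+c+2*d) + c*(2*a+3*b+d) + d*(a+2*b+3*c) = 4*S := by
      rw [hS]; ring
    nlinarith [h1, h2, h3, h4]
  have hkS : 2*k*(a+b+c+d) - k^2*(4*S) = (a+b+c+d)^2/(4*S) := by
    rw [hk]; field_simp; ring
  rw [hkS] at hsum
  have hfinal : (a+b+c+d)^2/(4*S) ≥ 2/3 := by
    rw [ge_iff_le, div_le_div_iff₀ (by norm_num) (by positivity)]
    nlinarith [sq_nonneg (a-b), sq_nonneg (a-c), sq_nonneg (a-d), sq_nonneg (b-c), sq_nonneg (b-d), sq_nonneg (c-d)]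
  linarith
end

section
/- For positive reals a, b, c with abc = 1, 1/(c^3(a+b)) + 1/(b^3(a+c)) + 1/(a^3(b+c)) ≥ 3/2. -/
lemma aux_ge3 (x y z : ℝ) (hx : 0 < x) (hy : 0 < y) (hz : 0 < z)
    (hxyz : x*y*z = 1) : x + y + z ≥ 3 := by
  nlinarith [sq_nonneg (x-y), sq_nonneg (y-z), sq_nonneg (x-z),
    sq_nonneg (x+y+z-3), mul_pos hx hy, mul_pos hy hz, mul_pos hx hz,
    sq_nonneg (x+y+z)]

lemma aux_nesbitt (x y z : ℝ) (hx : 0 < x) (hy : 0 < y) (hz : 0 < z)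
    (hxyz : x*y*z = 1) :
    x^2/(y+z) + y^2/(z+x) + z^2/(x+y) ≥ 3/2 := by
  have h3 := aux_ge3 x y z hx hy hz hxyz
  have h1 : x^2/(y+z) + y^2/(z+x) + z^2/(x+y) ≥ (x+y+z)/2 := by
    rw [ge_iff_le, div_add_div _ _ (by positivity) (by positivity),
      div_add_div _ _ (by positivity) (by positivity), div_le_div_iff₀ (by norm_num) (by positivity)]
    nlinarith [sq_nonneg (x-y), sq_nonneg (y-z), sq_nonneg (x-z),
      mul_pos hx hy, mul_pos hy hz, mul_pos hx hz,
      mul_pos (mul_pos hx hy) hz,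
      mul_nonneg (mul_nonneg hx.le hy.le) (sq_nonneg (x-y)),
      mul_nonneg (mul_nonneg hy.le hz.le) (sq_nonneg (y-z)),
      mul_nonneg (mul_nonneg hx.le hz.le) (sq_nonneg (x-z)),
      mul_nonneg hz.le (sq_nonneg (x-y)),
      mul_nonneg hx.le (sq_nonneg (y-z)),
      mul_nonneg hy.le (sq_nonneg (x-z))]
  linarith

theorem stmt_2 (a b c : ℝ) (ha : 0 < a) (hb : 0 < b) (hc : 0 < c) (h : a*b*c = 1) :
    1/(c^3*(a+b)) + 1/(b^3*(a+c)) + 1/(a^3*(b+c)) ≥ 3/2 := by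
  have key := aux_nesbitt (b*c) (c*a) (a*b) (by positivity) (by positivity) (by positivity)
    (by nlinarith)
  have e1 : 1/(c^3*(a+b)) = (a*b)^2/(b*c + c*a) := by
    rw [div_eq_div_iff (by positivity) (by positivity)]
    linear_combination (-(c*(a+b))*(a*b*c+1)) * h
  have e2 : 1/(b^3*(a+c)) = (c*a)^2/(a*b + b*c) := by
    rw [div_eq_div_iff (by positivity) (by positivity)]
    linear_combination (-(b*(a+c))*(a*b*c+1)) * h
  have e3 : 1/(a^3*(b+c)) = (b*c)^2/(c*a + a*b) := by
    rw [div_eq_div_iff (by positivity) (by positivity)]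
    linear_combination (-(a*(b+c))*(a*b*c+1)) * h
  rw [e1, e2, e3]
  linarith [key]
end

section
/- For positive reals a, b, c with abc = 1, ab/(a^5 + ab + b^5) + ac/(a^5 + ac + c^5) + bc/(b^5 + bc + c^5) ≤ 1. -/
lemma aux_term (x y z : ℝ) (hx : 0 < x) (hy : 0 < y) (hz : 0 < z) (h : x*y*z = 1) :
    x*y/(x^5 + x*y + y^5) ≤ z/(x+y+z) := by
  have hd : 0 < x^5 + x*y + y^5 := by positivity
  have hs : 0 < x + y + z := by positivity
  rw [div_le_div_iff₀ hd hs]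
  have key : x^2*y^2*(x+y) ≤ x^5 + y^5 := by
    nlinarith [sq_nonneg (x-y), sq_nonneg (x+y), mul_pos hx hy, sq_nonneg (x*x - y*y),
      mul_nonneg (mul_nonneg hx.le hy.le) (sq_nonneg (x-y))]
  nlinarith [mul_nonneg hz.le (sub_nonneg.mpr key), mul_pos hx hy, mul_pos (mul_pos hx hy) hz]

theorem stmt_3 (a b c : ℝ) (ha : 0 < a) (hb : 0 < b) (hc : 0 < c) (h : a*b*c = 1) :
    a*b/(a^5 + a*b + b^5) + a*c/(a^5 + a*c + c^5) + b*c/(b^5 + b*c + c^5) ≤ 1 := by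
  have h1 := aux_term a b c ha hb hc h
  have h3 := aux_term b c a hb hc ha (by nlinarith)
  have h2' := aux_term a c b ha hc hb (by nlinarith)
  have hs : 0 < a + b + c := by positivity
  have : c/(a+b+c) + b/(a+c+b) + a/(b+c+a) = 1 := by
    field_simp; ring
  linarith [h1, h2', h3]
end

section
/- For positive reals a, b, c with abc = 1, a^3/((1+b)(1+c)) + b^3/((1+c)(1+a)) + c^3/((1+a)(1+b)) ≥ 3/4. -/
theorem stmt_5 (a b c : ℝ) (ha : 0 < a) (hb : 0 < b) (hc : 0 < c) (h : a*b*c = 1) :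
    a^3/((1+b)*(1+c)) + b^3/((1+c)*(1+a)) + c^3/((1+a)*(1+b)) ≥ 3/4 := by
  have h1 : 0 < 1 + a := by linarith
  have h2 : 0 < 1 + b := by linarith
  have h3 : 0 < 1 + c := by linarith
  have key : a^3/((1+b)*(1+c)) + b^3/((1+c)*(1+a)) + c^3/((1+a)*(1+b)) - 3/4
      = (4*(a^3*(1+a)+b^3*(1+b)+c^3*(1+c)) - 3*((1+a)*((1+b)*(1+c))))
        / (4*((1+a)*((1+b)*(1+c)))) := by
    field_simp
  have num : 4*(a^3*(1+a)+b^3*(1+b)+c^3*(1+c)) - 3*((1+a)*((1+b)*(1+c))) ≥ 0 := by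
    have hs : a + b + c ≥ 3 := by
      nlinarith [sq_nonneg (a-b), sq_nonneg (b-c), sq_nonneg (a-c), sq_nonneg (a+b+c),
        mul_pos ha hb, mul_pos hb hc]
    have hq3 : a^2+b^2+c^2 ≥ 3 := by
      nlinarith [sq_nonneg (a-1), sq_nonneg (b-1), sq_nonneg (c-1)]
    have hqs : a^2+b^2+c^2 ≥ a+b+c := by
      nlinarith [sq_nonneg (a-1), sq_nonneg (b-1), sq_nonneg (c-1)]
    have hqp : a^2+b^2+c^2 ≥ a*b+b*c+a*c := by
      nlinarith [sq_nonneg (a-b), sq_nonneg (b-c), sq_nonneg (a-c)]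
    have hc3 : a^3+b^3+c^3 ≥ 3 := by
      nlinarith [sq_nonneg (a-b), sq_nonneg (b-c), sq_nonneg (a-c), sq_nonneg (a+b+c),
        mul_pos ha hb, mul_pos hb hc]
    have hc4 : a^4+b^4+c^4 ≥ 2*(a^2+b^2+c^2) - 3 := by
      nlinarith [sq_nonneg (a^2-1), sq_nonneg (b^2-1), sq_nonneg (c^2-1)]
    nlinarith [hs, hq3, hqs, hqp, hc3, hc4]
  have denpos : 0 < 4*((1+a)*((1+b)*(1+c))) := by positivity
  have := div_nonneg num denpos.le
  linarith [key ▸ this]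
end

section
/- For positive reals a, b, c with abc = 1, (a - 1 + 1/b)(b - 1 + 1/c)(c - 1 + 1/a) ≤ 1. -/
set_option maxHeartbeats 1000000 in
theorem stmt_6 (a b c : ℝ) (ha : 0 < a) (hb : 0 < b) (hc : 0 < c) (h : a*b*c = 1) :
    (a - 1 + 1/b)*(b - 1 + 1/c)*(c - 1 + 1/a) ≤ 1 := by
  have hb' : 1/b = a*c := by
    field_simp; nlinarith [h]
  have hc' : 1/c = a*b := by
    field_simp; nlinarith [h]
  have ha' : 1/a = b*c := by
    field_simp; nlinarith [h]
  rw [hb', hc', ha']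
  set u := a - 1 + a*c with hu_def
  set v := b - 1 + a*b with hv_def
  set w := c - 1 + b*c with hw_def
  clear_value u v w
  rcases le_or_gt u 0 with hu | hu
  · -- u ≤ 0 ⇒ a < 1 and a*c < 1 ⇒ b > 1 ⇒ v > 0; b*c = 1/a > 1 ⇒ w > 0
    have hac : a*c < 1 := by simp only [hu_def] at hu; nlinarith
    have ha1 : a < 1 := by simp only [hu_def] at hu; nlinarith [mul_pos ha hc]
    have hb1 : 1 < b := by nlinarith [mul_pos ha hc]
    have hv : 0 < v := by simp only [hv_def]; nlinarith [mul_pos ha hb]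
    have hbc : 1 < b*c := by nlinarith [mul_pos hb hc]
    have hw : 0 < w := by simp only [hw_def]; nlinarith
    nlinarith [mul_nonneg hv.le hw.le, mul_nonpos_of_nonpos_of_nonneg hu (mul_nonneg hv.le hw.le)]
  rcases le_or_gt v 0 with hv | hv
  · have hab : a*b < 1 := by simp only [hv_def] at hv; nlinarith
    have hb1 : b < 1 := by simp only [hv_def] at hv; nlinarith [mul_pos ha hb]
    have hc1 : 1 < c := by nlinarith [mul_pos ha hb]
    have hw : 0 < w := by simp only [hw_def]; nlinarith [mul_pos hb hc]
    nlinarith [mul_pos hu hw]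
  rcases le_or_gt w 0 with hw | hw
  · nlinarith [mul_pos hu hv]
  · -- all positive case
    have e1 : (a - 1 + a*c)*(b - 1 + a*b)*c = a - a*(b*c - c)^2 := by
      linear_combination (a + a*c - c + b*c) * h
    have e2 : (b - 1 + a*b)*(c - 1 + b*c)*c = b^2*c^2 - (1-c)^2 := by
      linear_combination (c + b*c - 1) * h
    have e3 : (a - 1 + a*c)*(c - 1 + b*c) = a*c^2 - a*(b*c - 1)^2 := by
      linear_combination (c + b*c - 1) * h
    have h1 : u * v * c ≤ a := by
      simp only [hu_def, hv_def]
      rw [e1]; nlinarith [mul_nonneg ha.le (sq_nonneg (b*c - c))]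
    have h2 : v * w * c ≤ b^2 * c^2 := by
      simp only [hv_def, hw_def]
      rw [e2]; nlinarith [sq_nonneg (1-c)]
    have h3 : u * w ≤ a * c^2 := by
      simp only [hu_def, hw_def]
      rw [e3]; nlinarith [mul_nonneg ha.le (sq_nonneg (b*c - 1))]
    have k1 : (u*v*c) * (v*w*c) ≤ a * (b^2*c^2) := by
      apply mul_le_mul h1 h2 (by positivity) ha.le
    have k2 : ((u*v*c)*(v*w*c)) * (u*w) ≤ (a*(b^2*c^2)) * (a*c^2) := by
      apply mul_le_mul k1 h3 (by positivity) (by positivity)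
    have e4 : (a*(b^2*c^2)) * (a*c^2) = c^2 := by
      linear_combination (c^2*(a*b*c+1)) * h
    have hsq : (u*v*w)^2 * c^2 ≤ 1 * c^2 := by
      have hr : (u*v*w)^2 * c^2 = ((u*v*c)*(v*w*c))*(u*w) := by ring
      rw [hr, one_mul, ← e4]; exact k2
    have hsq' : (u*v*w)^2 ≤ 1 := le_of_mul_le_mul_right hsq (pow_pos hc 2)
    nlinarith [sq_nonneg (u*v*w - 1), hsq']
end

section
/- For positive reals a, b, c, a/sqrt(a^2 + 8bc) + b/sqrt(b^2 + 8ca) + c/sqrt(c^2 + 8ab) ≥ 1. -/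
lemma key_aux_s7 (x y z : ℝ) (hx : 0 < x) (hy : 0 < y) (hz : 0 < z) :
    x^3 / Real.sqrt ((x^3)^2 + 8*y^3*z^3) ≥ x^4 / (x^4 + y^4 + z^4) := by
  have hS : 0 < x^4 + y^4 + z^4 := by positivity
  have hD : 0 < (x^3)^2 + 8*y^3*z^3 := by positivity
  have hsq : (x^3)^2 + 8*y^3*z^3 ≤ ((x^4+y^4+z^4)/x)^2 := by
    rw [div_pow, le_div_iff₀ (by positivity)]
    nlinarith [sq_nonneg (x^2*(y^2-z^2)), sq_nonneg (y^4-z^4),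
      sq_nonneg (y*z*(x^2-y*z)), sq_nonneg (x^2-y*z), hy.le, hz.le,
      mul_pos hy hz, sq_nonneg (y-z)]
  have hle : Real.sqrt ((x^3)^2 + 8*y^3*z^3) ≤ (x^4+y^4+z^4)/x := by
    calc Real.sqrt ((x^3)^2 + 8*y^3*z^3) ≤ Real.sqrt (((x^4+y^4+z^4)/x)^2) :=
          Real.sqrt_le_sqrt hsq
      _ = (x^4+y^4+z^4)/x := Real.sqrt_sq (by positivity)
  have hsqrt : 0 < Real.sqrt ((x^3)^2 + 8*y^3*z^3) := Real.sqrt_pos.mpr hD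
  have := div_le_div_of_nonneg_left (by positivity : (0:ℝ) ≤ x^3) hsqrt hle
  calc x^4 / (x^4+y^4+z^4) = x^3 / ((x^4+y^4+z^4)/x) := by
        field_simp
    _ ≤ x^3 / Real.sqrt ((x^3)^2 + 8*y^3*z^3) :=
        div_le_div_of_nonneg_left (by positivity) hsqrt hle

theorem stmt_7 (a b c : ℝ) (ha : 0 < a) (hb : 0 < b) (hc : 0 < c) :
    a/Real.sqrt (a^2 + 8*b*c) + b/Real.sqrt (b^2 + 8*c*a) + c/Real.sqrt (c^2 + 8*a*b) ≥ 1 := by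
  set x := a ^ ((1:ℝ)/3) with hxdef
  set y := b ^ ((1:ℝ)/3) with hydef
  set z := c ^ ((1:ℝ)/3) with hzdef
  have hx : 0 < x := Real.rpow_pos_of_pos ha _
  have hy : 0 < y := Real.rpow_pos_of_pos hb _
  have hz : 0 < z := Real.rpow_pos_of_pos hc _
  have hxa : x^3 = a := by
    rw [hxdef, ← Real.rpow_natCast (a ^ ((1:ℝ)/3)) 3, ← Real.rpow_mul ha.le]
    norm_num
  have hyb : y^3 = b := by
    rw [hydef, ← Real.rpow_natCast (b ^ ((1:ℝ)/3)) 3, ← Real.rpow_mul hb.le]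
    norm_num
  have hzc : z^3 = c := by
    rw [hzdef, ← Real.rpow_natCast (c ^ ((1:ℝ)/3)) 3, ← Real.rpow_mul hc.le]
    norm_num
  have h1 := key_aux_s7 x y z hx hy hz
  have h2 := key_aux_s7 y z x hy hz hx
  have h3 := key_aux_s7 z x y hz hx hy
  rw [hxa, hyb, hzc] at h1 h2 h3
  have hS : 0 < x^4 + y^4 + z^4 := by positivity
  have hsum : x^4/(x^4+y^4+z^4) + y^4/(y^4+z^4+x^4) + z^4/(z^4+x^4+y^4) = 1 := by
    field_simp; ring
  have e1 : b^2 + 8*c*a = b^2 + 8*c*a := rfl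
  calc a/Real.sqrt (a^2 + 8*b*c) + b/Real.sqrt (b^2 + 8*c*a) + c/Real.sqrt (c^2 + 8*a*b)
      ≥ x^4/(x^4+y^4+z^4) + y^4/(y^4+z^4+x^4) + z^4/(z^4+x^4+y^4) := by
        linarith [h1, h2, h3]
    _ = 1 := hsum
end

section
/- For positive reals a, b, c, (a+b+2c)^2/(2c^2 + (a+b)^2) + (a+2b+c)^2/(2b^2 + (a+c)^2) + (2a+b+c)^2/(2a^2 + (b+c)^2) ≤ 8. -/
lemma key_tl (s x : ℝ) (hs : 0 < s) (hx : 0 < x) :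
    (s + x)^2 / (3*x^2 - 2*x*s + s^2) ≤ (12*x + 4*s) / (3*s) := by
  have hd : 0 < 3*x^2 - 2*x*s + s^2 := by nlinarith [sq_nonneg (x - s), sq_nonneg x]
  rw [div_le_div_iff₀ hd (by linarith)]
  nlinarith [mul_nonneg (sq_nonneg (3*x - s)) (by linarith : (0:ℝ) ≤ 4*x + s)]

theorem stmt_8 (a b c : ℝ) (ha : 0 < a) (hb : 0 < b) (hc : 0 < c) :
    (a+b+2*c)^2/(2*c^2 + (a+b)^2) + (a+2*b+c)^2/(2*b^2 + (a+c)^2) + (2*a+b+c)^2/(2*a^2 + (b+c)^2) ≤ 8 := by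
  set s := a + b + c with hsdef
  have hs : 0 < s := by positivity
  have h1 := key_tl s c hs hc
  have h2 := key_tl s b hs hb
  have h3 := key_tl s a hs ha
  have e1 : (a+b+2*c)^2/(2*c^2 + (a+b)^2) = (s + c)^2 / (3*c^2 - 2*c*s + s^2) := by
    rw [hsdef]; ring_nf
  have e2 : (a+2*b+c)^2/(2*b^2 + (a+c)^2) = (s + b)^2 / (3*b^2 - 2*b*s + s^2) := by
    rw [hsdef]; ring_nf
  have e3 : (2*a+b+c)^2/(2*a^2 + (b+c)^2) = (s + a)^2 / (3*a^2 - 2*a*s + s^2) := by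
    rw [hsdef]; ring_nf
  rw [e1, e2, e3]
  have hsum : (12*c + 4*s)/(3*s) + (12*b + 4*s)/(3*s) + (12*a + 4*s)/(3*s) = 8 := by
    field_simp
    rw [hsdef]; ring
  linarith
end

section
/- For positive reals a, b, c, d, a/(a^3 + 63bcd)^(1/3) + b/(b^3 + 63acd)^(1/3) + c/(c^3 + 63abd)^(1/3) + d/(d^3 + 63abc)^(1/3) ≥ 1. -/
/-!
By Radon's inequality `(∑ xᵢ)⁴ / (∑ uᵢ)³ ≤ ∑ xᵢ⁴ / uᵢ³` with `xᵢ = a` and `uᵢ = a / ∛(a³ + 63bcd)`,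
the fourth power of `a + b + c + d` divided by the cube of the left-hand side is at most
`∑ a (a³ + 63bcd) = a⁴ + b⁴ + c⁴ + d⁴ + 252abcd`, which is at most `(a + b + c + d)⁴` by AM-GM
applied to the mixed monomials of the expansion. Hence the cube of the left-hand side is at least `1`.
-/

namespace Finset

variable {ι R : Type*} [Semifield R] [LinearOrder R] [IsStrictOrderedRing R] [ExistsAddOfLE R]

theorem pow_four_sum_div_le_sum_pow_four_div (s : Finset ι) (f : ι → R) {g : ι → R}
    (hg : ∀ i ∈ s, 0 < g i) :
    (∑ i ∈ s, f i) ^ 4 / (∑ i ∈ s, g i) ^ 3 ≤ ∑ i ∈ s, f i ^ 4 / g i ^ 3 := by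
  have hG : 0 ≤ ∑ i ∈ s, g i := sum_nonneg fun i hi ↦ (hg i hi).le
  calc (∑ i ∈ s, f i) ^ 4 / (∑ i ∈ s, g i) ^ 3
      = ((∑ i ∈ s, f i) ^ 2 / ∑ i ∈ s, g i) ^ 2 / ∑ i ∈ s, g i := by
        rw [div_pow, div_div, ← pow_mul, ← pow_succ]
    _ ≤ (∑ i ∈ s, f i ^ 2 / g i) ^ 2 / ∑ i ∈ s, g i := by
        gcongr
        · exact div_nonneg (sq_nonneg _) hG
        · exact sq_sum_div_le_sum_sq_div s f hg
    _ ≤ ∑ i ∈ s, (f i ^ 2 / g i) ^ 2 / g i := sq_sum_div_le_sum_sq_div s _ hg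
    _ = ∑ i ∈ s, f i ^ 4 / g i ^ 3 := by
        refine sum_congr rfl fun i _ ↦ ?_
        rw [div_pow, div_div, ← pow_mul, ← pow_succ]

end Finset

theorem pow_four_add_mul_le_add_pow_four {a b c d : ℝ}
    (ha : 0 ≤ a) (hb : 0 ≤ b) (hc : 0 ≤ c) (hd : 0 ≤ d) :
    a ^ 4 + b ^ 4 + c ^ 4 + d ^ 4 + 252 * a * b * c * d ≤ (a + b + c + d) ^ 4 := by
  nlinarith [mul_nonneg (mul_nonneg ha hb) (sq_nonneg (a - b)),
    mul_nonneg (mul_nonneg ha hc) (sq_nonneg (a - c)),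
    mul_nonneg (mul_nonneg ha hd) (sq_nonneg (a - d)),
    mul_nonneg (mul_nonneg hb hc) (sq_nonneg (b - c)),
    mul_nonneg (mul_nonneg hb hd) (sq_nonneg (b - d)),
    mul_nonneg (mul_nonneg hc hd) (sq_nonneg (c - d)),
    mul_nonneg (mul_nonneg hb hc) (sq_nonneg (a - d)),
    mul_nonneg (mul_nonneg hb hd) (sq_nonneg (a - c)),
    mul_nonneg (mul_nonneg hc hd) (sq_nonneg (a - b)),
    mul_nonneg (mul_nonneg ha hc) (sq_nonneg (b - d)),
    mul_nonneg (mul_nonneg ha hd) (sq_nonneg (b - c)),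
    mul_nonneg (mul_nonneg ha hb) (sq_nonneg (c - d)),
    sq_nonneg (a * b - c * d), sq_nonneg (a * c - b * d), sq_nonneg (a * d - b * c)]

theorem Real.rpow_one_div_three_pow_three {x : ℝ} (hx : 0 ≤ x) : (x ^ ((1 : ℝ) / 3)) ^ 3 = x := by
  simpa using Real.rpow_inv_natCast_pow (n := 3) hx three_ne_zero

theorem pow_four_div_pow_three_div_cbrt {x e : ℝ} (hx : x ≠ 0) (he : 0 < e) :
    x ^ 4 / (x / e ^ ((1 : ℝ) / 3)) ^ 3 = x * e := by
  have hcbrt : e ^ ((1 : ℝ) / 3) ≠ 0 := (Real.rpow_pos_of_pos he _).ne'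
  rw [div_pow, Real.rpow_one_div_three_pow_three he.le]
  field_simp

theorem one_le_of_div_pow_three_le {T S : ℝ} (hT : 0 < T) (hS : 0 < S) (h : T / S ^ 3 ≤ T) :
    1 ≤ S := by
  rw [div_le_iff₀ (by positivity), le_mul_iff_one_le_right hT] at h
  exact (one_le_pow_iff_of_nonneg hS.le three_ne_zero).mp h

theorem stmt_9 (a b c d : ℝ) (ha : 0 < a) (hb : 0 < b) (hc : 0 < c) (hd : 0 < d) :
    a/(a^3 + 63*b*c*d)^((1:ℝ)/3) + b/(b^3 + 63*a*c*d)^((1:ℝ)/3)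
      + c/(c^3 + 63*a*b*d)^((1:ℝ)/3) + d/(d^3 + 63*a*b*c)^((1:ℝ)/3) ≥ 1 := by
  set x : Fin 4 → ℝ := ![a, b, c, d]
  set e : Fin 4 → ℝ := ![a^3 + 63*b*c*d, b^3 + 63*a*c*d, c^3 + 63*a*b*d, d^3 + 63*a*b*c]
  have hx : ∀ i, 0 < x i := by intro i; fin_cases i <;> assumption
  have he : ∀ i, 0 < e i := by intro i; fin_cases i <;> dsimp [e] <;> positivity
  have radon := Finset.univ.pow_four_sum_div_le_sum_pow_four_div x
    (g := fun i ↦ x i / e i ^ ((1 : ℝ) / 3)) fun i _ ↦ div_pos (hx i) (Real.rpow_pos_of_pos (he i) _)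
  simp only [pow_four_div_pow_three_div_cbrt (hx _).ne' (he _)] at radon
  simp only [Fin.sum_univ_four, x, e, Matrix.cons_val] at radon
  refine one_le_of_div_pow_three_le (by positivity) (by positivity) (radon.trans ?_)
  linarith [pow_four_add_mul_le_add_pow_four ha.le hb.le hc.le hd.le]
end

section
/- For all real numbers a, b, c, |ab(a^2-b^2) + bc(b^2-c^2) + ca(c^2-a^2)| ≤ (9/(16*sqrt 2)) * (a^2+b^2+c^2)^2. -/
lemma aux1 (x y : ℝ) : x^2*y^2*(x+y)^2 ≤ (x^2+y^2+(x+y)^2)^3/54 := by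
  nlinarith [sq_nonneg ((x-y)*(2*x+y)*(x+2*y))]

lemma aux2 (t u : ℝ) (ht : 0 ≤ t) (hu : 0 ≤ u) : t^3*u ≤ 27*(t+u)^4/256 := by
  nlinarith [mul_nonneg (sq_nonneg (t-3*u)) (by nlinarith [sq_nonneg t, sq_nonneg u, mul_nonneg ht hu] : (0:ℝ) ≤ 27*t^2+14*t*u+3*u^2)]

lemma aux_key (a b c : ℝ) :
    (a*b*(a^2-b^2) + b*c*(b^2-c^2) + c*a*(c^2-a^2))^2 ≤ 81/512 * (a^2+b^2+c^2)^4 := by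
  have hz : a*b*(a^2-b^2) + b*c*(b^2-c^2) + c*a*(c^2-a^2)
      = (a-b)*(b-c)*((a-b)+(b-c))*(a+b+c) := by ring
  have hQ : (a^2+b^2+c^2) = ((a-b)^2 + (b-c)^2 + ((a-b)+(b-c))^2 + (a+b+c)^2)/3 := by ring
  rw [hz, hQ]
  have h1 := aux1 (a-b) (b-c)
  have h2 := aux2 ((a-b)^2+(b-c)^2+((a-b)+(b-c))^2) ((a+b+c)^2) (by positivity) (sq_nonneg _)
  nlinarith [mul_le_mul_of_nonneg_right h1 (sq_nonneg (a+b+c))]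

theorem stmt_10 (a b c : ℝ) :
    |a*b*(a^2-b^2) + b*c*(b^2-c^2) + c*a*(c^2-a^2)| ≤ 9/(16*Real.sqrt 2) * (a^2+b^2+c^2)^2 := by
  have h2 : Real.sqrt 2 ^ 2 = 2 := Real.sq_sqrt (by norm_num)
  have key := aux_key a b c
  have hc : (9/(16*Real.sqrt 2))^2 = 81/512 := by
    rw [div_pow, mul_pow, h2]; norm_num
  have hnn : 0 ≤ 9/(16*Real.sqrt 2) * (a^2+b^2+c^2)^2 := by positivity
  have hrhs : (9/(16*Real.sqrt 2) * (a^2+b^2+c^2)^2)^2 = 81/512 * (a^2+b^2+c^2)^4 := by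
    rw [mul_pow, hc]; ring
  calc |a*b*(a^2-b^2) + b*c*(b^2-c^2) + c*a*(c^2-a^2)|
      = Real.sqrt ((a*b*(a^2-b^2) + b*c*(b^2-c^2) + c*a*(c^2-a^2))^2) :=
        (Real.sqrt_sq_eq_abs _).symm
    _ ≤ Real.sqrt ((9/(16*Real.sqrt 2) * (a^2+b^2+c^2)^2)^2) := by
        apply Real.sqrt_le_sqrt; rw [hrhs]; exact key
    _ = 9/(16*Real.sqrt 2) * (a^2+b^2+c^2)^2 := Real.sqrt_sq hnn
end

section
/- For positive reals a, b, c with 1/a + 1/b + 1/c = a + b + c, we have 1/(2a+b+c)^2 + 1/(a+2b+c)^2 + 1/(a+b+2c)^2 ≤ 3/16. -/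
theorem stmt_11 (a b c : ℝ) (ha : 0 < a) (hb : 0 < b) (hc : 0 < c)
    (h : 1/a + 1/b + 1/c = a + b + c) :
    1/(2*a+b+c)^2 + 1/(a+2*b+c)^2 + 1/(a+b+2*c)^2 ≤ 3/16 := by
  have hab : 0 < a + b := by linarith
  have hbc : 0 < b + c := by linarith
  have hca : 0 < c + a := by linarith
  -- constraint: ab+bc+ca = abc(a+b+c)
  have hcond : a*b + b*c + c*a = a*b*c*(a+b+c) := by
    field_simp at h
    nlinarith [h]
  set q := a*b + b*c + c*a with hq
  have hq3 : 3 ≤ q := by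
    have h1 : q^2 ≥ 3*(a+b+c)*(a*b*c) := by nlinarith [sq_nonneg (a*b - b*c), sq_nonneg (b*c - c*a), sq_nonneg (c*a - a*b)]
    have h2 : q^2 ≥ 3*q := by nlinarith [hcond]
    nlinarith [mul_pos ha hb, mul_pos hb hc, mul_pos hc ha]
  have hp9 : (a+b+c)^2 ≥ 9 := by
    nlinarith [sq_nonneg (a-b), sq_nonneg (b-c), sq_nonneg (c-a)]
  -- key: 8(a+b+c) ≤ 3(a+b)(b+c)(c+a)
  have hkey : 8*(a+b+c) ≤ 3*((a+b)*(b+c)*(c+a)) := by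
    have hp : 0 < a + b + c := by linarith
    have hr : a*b*c = q / (a+b+c) := by
      field_simp
      nlinarith [hcond]
    have hprod : (a+b)*(b+c)*(c+a) = (a+b+c)*q - a*b*c := by ring
    rw [hprod, hr]
    have heq : 3*((a+b+c)*q - q/(a+b+c)) = (3*((a+b+c)^2*q - q))/(a+b+c) := by
      field_simp
    rw [heq, le_div_iff₀ hp]
    nlinarith
  -- bound each term
  have t1 : 1/(2*a+b+c)^2 ≤ 1/(4*(a+b)*(a+c)) := by
    apply one_div_le_one_div_of_le (by positivity)
    nlinarith [sq_nonneg (b-c)]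
  have t2 : 1/(a+2*b+c)^2 ≤ 1/(4*(b+a)*(b+c)) := by
    apply one_div_le_one_div_of_le (by positivity)
    nlinarith [sq_nonneg (a-c)]
  have t3 : 1/(a+b+2*c)^2 ≤ 1/(4*(c+a)*(c+b)) := by
    apply one_div_le_one_div_of_le (by positivity)
    nlinarith [sq_nonneg (a-b)]
  have hsum : 1/(4*(a+b)*(a+c)) + 1/(4*(b+a)*(b+c)) + 1/(4*(c+a)*(c+b)) ≤ 3/16 := by
    have heq : 1/(4*(a+b)*(a+c)) + 1/(4*(b+a)*(b+c)) + 1/(4*(c+a)*(c+b))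
        = (a+b+c)/(2*((a+b)*(b+c)*(c+a))) := by
      field_simp; ring
    rw [heq, div_le_div_iff₀ (by positivity) (by norm_num)]
    linarith
  linarith
end

section
/- For positive reals a, b, c with abc = 1, 1/(c^5(a+2b)^2) + 1/(b^5(2a+c)^2) + 1/(a^5(b+2c)^2) ≥ 1/3. -/
private lemma CS3 (u v w p q r : ℝ) (hp : 0 < p) (hq : 0 < q) (hr : 0 < r) :
    (u+v+w)^2/(p+q+r) ≤ u^2/p + v^2/q + w^2/r := by
  rw [div_add_div _ _ (ne_of_gt hp) (ne_of_gt hq),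
      div_add_div _ _ (by positivity) (ne_of_gt hr),
      div_le_div_iff₀ (by positivity) (by positivity)]
  nlinarith [mul_nonneg (sq_nonneg (u*q - v*p)) hr.le,
    mul_nonneg (sq_nonneg (u*r - w*p)) hq.le,
    mul_nonneg (sq_nonneg (v*r - w*q)) hp.le]

private lemma amgm3 (x y z : ℝ) (hx : 0 < x) (hy : 0 < y) (hz : 0 < z) (h : x*y*z = 1) :
    x + y + z ≥ 3 := by
  have p : (x+y+z)^3 ≥ 27 * (x*y*z) := by
    nlinarith [mul_nonneg (mul_nonneg (sq_nonneg (x-y)) hx.le) hy.le,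
      mul_nonneg (mul_nonneg (sq_nonneg (y-z)) hy.le) hz.le,
      mul_nonneg (mul_nonneg (sq_nonneg (x-z)) hx.le) hz.le,
      mul_nonneg (sq_nonneg (x-y)) hz.le, mul_nonneg (sq_nonneg (y-z)) hx.le,
      mul_nonneg (sq_nonneg (x-z)) hy.le]
  rw [h] at p
  nlinarith [sq_nonneg (x+y+z-3), sq_nonneg (x+y+z+3), add_pos (add_pos hx hy) hz]

private lemma key3 (x y z : ℝ) (hx : 0 < x) (hy : 0 < y) (hz : 0 < z) (h : x*y*z = 1) :
    3*(x^2+y^2+z^2)^2 ≥ x*(z+2*y)^2 + y*(x+2*z)^2 + z*(y+2*x)^2 := by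
  have hs : x + y + z ≥ 3 := amgm3 x y z hx hy hz h
  have hom : 9*(x^2+y^2+z^2)^2 ≥ (x+y+z) * (x*(z+2*y)^2 + y*(x+2*z)^2 + z*(y+2*x)^2) := by
    nlinarith [sq_nonneg (x-y), sq_nonneg (y-z), sq_nonneg (x-z),
      mul_nonneg (mul_nonneg (sq_nonneg (x-y)) hz.le) (add_pos (add_pos hx hy) hz).le,
      mul_nonneg (mul_nonneg (sq_nonneg (y-z)) hx.le) (add_pos (add_pos hx hy) hz).le,
      mul_nonneg (mul_nonneg (sq_nonneg (x-z)) hy.le) (add_pos (add_pos hx hy) hz).le,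
      mul_nonneg (mul_nonneg (sq_nonneg (x-y)) hx.le) hy.le,
      mul_nonneg (mul_nonneg (sq_nonneg (y-z)) hy.le) hz.le,
      mul_nonneg (mul_nonneg (sq_nonneg (x-z)) hx.le) hz.le,
      sq_nonneg (x^2+y^2+z^2 - x*y - y*z - x*z), mul_pos (mul_pos hx hy) hz]
  have hSpos : 0 < x*(z+2*y)^2 + y*(x+2*z)^2 + z*(y+2*x)^2 := by positivity
  nlinarith [hom, hs, hSpos, mul_le_mul_of_nonneg_right hs hSpos.le]

private lemma main3 (x y z : ℝ) (hx : 0 < x) (hy : 0 < y) (hz : 0 < z) (h : x*y*z = 1) :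
    z^3/(y+2*x)^2 + y^3/(x+2*z)^2 + x^3/(z+2*y)^2 ≥ 1/3 := by
  have hp : 0 < z*(y+2*x)^2 := by positivity
  have hq : 0 < y*(x+2*z)^2 := by positivity
  have hr : 0 < x*(z+2*y)^2 := by positivity
  have cs := CS3 (z^2) (y^2) (x^2) (z*(y+2*x)^2) (y*(x+2*z)^2) (x*(z+2*y)^2) hp hq hr
  have e1 : (z^2)^2/(z*(y+2*x)^2) = z^3/(y+2*x)^2 := by
    field_simp
  have e2 : (y^2)^2/(y*(x+2*z)^2) = y^3/(x+2*z)^2 := by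
    field_simp
  have e3 : (x^2)^2/(x*(z+2*y)^2) = x^3/(z+2*y)^2 := by
    field_simp
  rw [e1, e2, e3] at cs
  have key := key3 x y z hx hy hz h
  have hS : 0 < z*(y+2*x)^2 + y*(x+2*z)^2 + x*(z+2*y)^2 := by positivity
  have : (1:ℝ)/3 ≤ (z^2+y^2+x^2)^2 / (z*(y+2*x)^2 + y*(x+2*z)^2 + x*(z+2*y)^2) := by
    rw [div_le_div_iff₀ (by norm_num) hS]
    nlinarith [key]
  linarith

theorem stmt_12 (a b c : ℝ) (ha : 0 < a) (hb : 0 < b) (hc : 0 < c) (h : a*b*c = 1) :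
    1/(c^5*(a+2*b)^2) + 1/(b^5*(2*a+c)^2) + 1/(a^5*(b+2*c)^2) ≥ 1/3 := by
  have h3 : (a*b*c)^3 = 1 := by rw [h]; norm_num
  have hx : 0 < b*c := mul_pos hb hc
  have hy : 0 < c*a := mul_pos hc ha
  have hz : 0 < a*b := mul_pos ha hb
  have hxyz : (b*c)*(c*a)*(a*b) = 1 := by nlinarith [h3]
  have main := main3 (b*c) (c*a) (a*b) hx hy hz hxyz
  have e1 : 1/(c^5*(a+2*b)^2) = (a*b)^3/((c*a)+2*(b*c))^2 := by
    rw [div_eq_div_iff (by positivity) (by positivity)]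
    linear_combination (-(c^2*(a+2*b)^2)) * h3
  have e2 : 1/(b^5*(2*a+c)^2) = (c*a)^3/((b*c)+2*(a*b))^2 := by
    rw [div_eq_div_iff (by positivity) (by positivity)]
    linear_combination (-(b^2*(2*a+c)^2)) * h3
  have e3 : 1/(a^5*(b+2*c)^2) = (b*c)^3/((a*b)+2*(c*a))^2 := by
    rw [div_eq_div_iff (by positivity) (by positivity)]
    linear_combination (-(a^2*(b+2*c)^2)) * h3
  rw [e1, e2, e3]
  convert main using 3 <;> ring
end

section
/- For positive reals a, b, c with a^2 + b^2 + c^2 + (a+b+c)^2 ≤ 4, we have (ab+1)/(a+b)^2 + (bc+1)/(b+c)^2 + (ca+1)/(c+a)^2 ≥ 3. -/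
theorem stmt_13 (a b c : ℝ) (ha : 0 < a) (hb : 0 < b) (hc : 0 < c)
    (h : a^2 + b^2 + c^2 + (a+b+c)^2 ≤ 4) :
    (a*b+1)/(a+b)^2 + (b*c+1)/(b+c)^2 + (c*a+1)/(c+a)^2 ≥ 3 := by
  have hx : (0:ℝ) < b + c := by linarith
  have hy : (0:ℝ) < c + a := by linarith
  have hz : (0:ℝ) < a + b := by linarith
  have k1 : (a*b+1)/(a+b)^2 ≥ ((a+b)^2 + (b+c)*(c+a))/(2*(a+b)^2) := by
    rw [ge_iff_le, div_le_div_iff₀ (by positivity) (by positivity)]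
    nlinarith [pow_pos hz 2, sq_nonneg (a+b)]
  have k2 : (b*c+1)/(b+c)^2 ≥ ((b+c)^2 + (c+a)*(a+b))/(2*(b+c)^2) := by
    rw [ge_iff_le, div_le_div_iff₀ (by positivity) (by positivity)]
    nlinarith [pow_pos hx 2, sq_nonneg (b+c)]
  have k3 : (c*a+1)/(c+a)^2 ≥ ((c+a)^2 + (a+b)*(b+c))/(2*(c+a)^2) := by
    rw [ge_iff_le, div_le_div_iff₀ (by positivity) (by positivity)]
    nlinarith [pow_pos hy 2, sq_nonneg (c+a)]
  have hs : ((a+b)^2 + (b+c)*(c+a))/(2*(a+b)^2) + ((b+c)^2 + (c+a)*(a+b))/(2*(b+c)^2)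
      + ((c+a)^2 + (a+b)*(b+c))/(2*(c+a)^2) ≥ 3 := by
    rw [ge_iff_le, div_add_div _ _ (by positivity) (by positivity),
      div_add_div _ _ (by positivity) (by positivity), le_div_iff₀ (by positivity)]
    nlinarith [sq_nonneg ((b+c)*(c+a) - (c+a)*(a+b)), sq_nonneg ((c+a)*(a+b) - (a+b)*(b+c)),
      sq_nonneg ((b+c)*(c+a) - (a+b)*(b+c)),
      mul_pos hx hy, mul_pos hy hz, mul_pos hz hx,
      mul_pos (mul_pos hx hy) hz]
  linarith [k1, k2, k3, hs]
end

section
/- For nonnegative reals a, b, c with a + b + c = 1, 1/(a^2 - 4a + 9) + 1/(b^2 - 4b + 9) + 1/(c^2 - 4c + 9) ≤ 7/18. -/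
lemma aux (x : ℝ) (hx : 0 ≤ x) : 1/(x^2 - 4*x + 9) ≤ 1/9 + x/18 := by
  have hpos : 0 < x^2 - 4*x + 9 := by nlinarith [sq_nonneg (x - 2)]
  rw [div_le_iff₀ hpos]
  nlinarith [mul_nonneg hx (sq_nonneg (x - 1))]

theorem stmt_14 (a b c : ℝ) (ha : 0 ≤ a) (hb : 0 ≤ b) (hc : 0 ≤ c) (h : a + b + c = 1) :
    1/(a^2 - 4*a + 9) + 1/(b^2 - 4*b + 9) + 1/(c^2 - 4*c + 9) ≤ 7/18 := by
  have := aux a ha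
  have := aux b hb
  have := aux c hc
  linarith
end

section
/- For positive reals a, b, c, (a+b+c)^3/(ab+bc+ca)^2 ≤ 4a/(b+c)^2 + 4b/(c+a)^2 + 4c/(a+b)^2. -/
lemma cauchy3 (x y z u v w : ℝ) (hx : 0 < x) (hy : 0 < y) (hz : 0 < z) :
    (u+v+w)^2 ≤ (u^2/x + v^2/y + w^2/z) * (x+y+z) := by
  rw [div_add_div _ _ hx.ne' hy.ne', div_add_div _ _ (mul_pos hx hy).ne' hz.ne',
    div_mul_eq_mul_div, le_div_iff₀ (by positivity)]
  nlinarith [sq_nonneg (u*y - v*x), sq_nonneg (u*z - w*x), sq_nonneg (v*z - w*y),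
    mul_pos hx hy, mul_pos hy hz, mul_pos hx hz, hx.le, hy.le, hz.le,
    mul_nonneg (mul_nonneg hz.le hz.le) (sq_nonneg (u*y - v*x)),
    mul_nonneg (mul_nonneg hy.le hy.le) (sq_nonneg (u*z - w*x)),
    mul_nonneg (mul_nonneg hx.le hx.le) (sq_nonneg (v*z - w*y)),
    mul_nonneg (mul_nonneg hy.le hz.le) (sq_nonneg (u*y - v*x)),
    mul_nonneg (mul_nonneg hx.le hz.le) (sq_nonneg (u*y - v*x)),
    mul_nonneg (mul_nonneg hx.le hz.le) (sq_nonneg (u*z - w*x)),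
    mul_nonneg (mul_nonneg hx.le hy.le) (sq_nonneg (v*z - w*y))]

theorem stmt_16 (a b c : ℝ) (ha : 0 < a) (hb : 0 < b) (hc : 0 < c) :
    (a+b+c)^3/(a*b+b*c+c*a)^2 ≤ 4*a/(b+c)^2 + 4*b/(c+a)^2 + 4*c/(a+b)^2 := by
  have hbc : 0 < b + c := by linarith
  have hca : 0 < c + a := by linarith
  have hab : 0 < a + b := by linarith
  have hs : 0 < a + b + c := by linarith
  have hq : 0 < a*b + b*c + c*a := by positivity
  set u := a/(b+c) with hu
  set v := b/(c+a) with hv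
  set w := c/(a+b) with hw
  have h1 : (a+b+c)^2/(2*(a*b+b*c+c*a)) ≤ u + v + w := by
    rw [hu, hv, hw, div_add_div _ _ hbc.ne' hca.ne',
      div_add_div _ _ (mul_pos hbc hca).ne' hab.ne', div_le_div_iff₀ (by positivity) (by positivity)]
    nlinarith [mul_nonneg (mul_nonneg (mul_pos ha hb).le hab.le) (sq_nonneg (a-b)),
      mul_nonneg (mul_nonneg (mul_pos hb hc).le hbc.le) (sq_nonneg (b-c)),
      mul_nonneg (mul_nonneg (mul_pos ha hc).le hca.le) (sq_nonneg (a-c))]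
  have h2 : (u+v+w)^2 ≤ (u^2/a + v^2/b + w^2/c) * (a+b+c) := cauchy3 a b c u v w ha hb hc
  have e1 : u^2/a = a/(b+c)^2 := by rw [hu]; field_simp
  have e2 : v^2/b = b/(c+a)^2 := by rw [hv]; field_simp
  have e3 : w^2/c = c/(a+b)^2 := by rw [hw]; field_simp
  have h3 : ((a+b+c)^2/(2*(a*b+b*c+c*a)))^2 ≤ (u+v+w)^2 := by
    apply pow_le_pow_left₀ (by positivity) h1
  have h4 : ((a+b+c)^2/(2*(a*b+b*c+c*a)))^2 = (a+b+c)^4/(4*(a*b+b*c+c*a)^2) := by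
    rw [div_pow]; ring_nf
  have h5 : (a+b+c)^4/(4*(a*b+b*c+c*a)^2) ≤ (a/(b+c)^2 + b/(c+a)^2 + c/(a+b)^2) * (a+b+c) := by
    rw [← h4, ← e1, ← e2, ← e3]; exact le_trans h3 h2
  have h6 : (a+b+c)^4/(4*(a*b+b*c+c*a)^2) / (a+b+c) = (a+b+c)^3/(4*(a*b+b*c+c*a)^2) := by
    field_simp
  have h7 : (a+b+c)^3/(4*(a*b+b*c+c*a)^2) ≤ a/(b+c)^2 + b/(c+a)^2 + c/(a+b)^2 := by
    rw [← h6, div_le_iff₀ hs] at *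
    linarith [h5]
  have : (a+b+c)^3/(a*b+b*c+c*a)^2 = 4 * ((a+b+c)^3/(4*(a*b+b*c+c*a)^2)) := by
    field_simp
  rw [this]
  have r1 : 4*a/(b+c)^2 = 4*(a/(b+c)^2) := by ring
  have r2 : 4*b/(c+a)^2 = 4*(b/(c+a)^2) := by ring
  have r3 : 4*c/(a+b)^2 = 4*(c/(a+b)^2) := by ring
  rw [r1, r2, r3]
  linarith [h7]
end

section
/- For positive reals a, b, c, 2(a+b+c)^(3/2) ≤ (sqrt(a+b) + sqrt(b+c) + sqrt(c+a)) * sqrt(a^2+b^2+c^2+ab+bc+ca). -/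
set_option maxHeartbeats 1000000 in
theorem stmt_18 (a b c : ℝ) (ha : 0 < a) (hb : 0 < b) (hc : 0 < c) :
    2*(a+b+c)^((3:ℝ)/2) ≤ (Real.sqrt (a+b) + Real.sqrt (b+c) + Real.sqrt (c+a))
      * Real.sqrt (a^2+b^2+c^2+a*b+b*c+c*a) := by
  set p := Real.sqrt (a+b) with hp'
  set q := Real.sqrt (b+c) with hq'
  set r := Real.sqrt (c+a) with hr'
  have hp : 0 ≤ p := Real.sqrt_nonneg _
  have hq : 0 ≤ q := Real.sqrt_nonneg _
  have hr : 0 ≤ r := Real.sqrt_nonneg _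
  have hp2 : p^2 = a+b := Real.sq_sqrt (by linarith)
  have hq2 : q^2 = b+c := Real.sq_sqrt (by linarith)
  have hr2 : r^2 = c+a := Real.sq_sqrt (by linarith)
  have hs : (0:ℝ) < a+b+c := by linarith
  have hrpow : (a+b+c)^((3:ℝ)/2) = (a+b+c) * Real.sqrt (a+b+c) := by
    rw [show (3:ℝ)/2 = 1 + 1/2 by norm_num, Real.rpow_add hs, Real.rpow_one,
      ← Real.sqrt_eq_rpow]
  rw [hrpow]
  set s := Real.sqrt (a+b+c) with hsdef
  set M := Real.sqrt (a^2+b^2+c^2+a*b+b*c+c*a) with hM'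
  have hsn : 0 ≤ s := Real.sqrt_nonneg _
  have hs2 : s^2 = a+b+c := Real.sq_sqrt hs.le
  have hMn : 0 ≤ M := Real.sqrt_nonneg _
  have hM2 : M^2 = a^2+b^2+c^2+a*b+b*c+c*a := Real.sq_sqrt (by positivity)
  -- key polynomial inequality (Cauchy-Schwarz chain)
  have h1 : (p^2+q^2+r^2)^2 ≤ (p+q+r) * (p^3+q^3+r^3) := by
    have e : (p+q+r) * (p^3+q^3+r^3) - (p^2+q^2+r^2)^2
        = p*q*(p-q)^2 + q*r*(q-r)^2 + p*r*(p-r)^2 := by ring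
    linarith [e, mul_nonneg (mul_nonneg hp hq) (sq_nonneg (p-q)),
      mul_nonneg (mul_nonneg hq hr) (sq_nonneg (q-r)),
      mul_nonneg (mul_nonneg hp hr) (sq_nonneg (p-r))]
  have h2 : (p^3+q^3+r^3)^2 ≤ (p^2+q^2+r^2) * (p^4+q^4+r^4) := by
    have e : (p^2+q^2+r^2) * (p^4+q^4+r^4) - (p^3+q^3+r^3)^2
        = p^2*q^2*(p-q)^2 + q^2*r^2*(q-r)^2 + p^2*r^2*(p-r)^2 := by ring
    linarith [e, mul_nonneg (mul_nonneg (sq_nonneg p) (sq_nonneg q)) (sq_nonneg (p-q)),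
      mul_nonneg (mul_nonneg (sq_nonneg q) (sq_nonneg r)) (sq_nonneg (q-r)),
      mul_nonneg (mul_nonneg (sq_nonneg p) (sq_nonneg r)) (sq_nonneg (p-r))]
  have hA : (0:ℝ) < p^2+q^2+r^2 := by rw [hp2, hq2, hr2]; linarith
  have h3 : (p^2+q^2+r^2)^4 ≤ (p+q+r)^2 * (p^3+q^3+r^3)^2 := by
    have := mul_le_mul h1 h1 (sq_nonneg _) (by positivity)
    linarith [this]
  have h4 : (p^2+q^2+r^2)^4 ≤ (p+q+r)^2 * ((p^2+q^2+r^2) * (p^4+q^4+r^4)) :=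
    h3.trans (mul_le_mul_of_nonneg_left h2 (sq_nonneg _))
  have h5 : (p^2+q^2+r^2) * ((p^2+q^2+r^2)^3)
      ≤ (p^2+q^2+r^2) * ((p+q+r)^2 * (p^4+q^4+r^4)) := by linarith [h4]
  have key : (p^2+q^2+r^2)^3 ≤ (p+q+r)^2 * (p^4+q^4+r^4) :=
    le_of_mul_le_mul_left h5 hA
  -- square comparison
  have hgoal2 : (2*((a+b+c)*s))^2 ≤ ((p+q+r)*M)^2 := by
    have e1 : (2*((a+b+c)*s))^2 = 4*(a+b+c)^2*s^2 := by ring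
    have e2 : ((p+q+r)*M)^2 = (p+q+r)^2 * M^2 := by ring
    rw [e1, e2, hs2, hM2]
    have habc : a+b+c = (p^2+q^2+r^2)/2 := by rw [hp2, hq2, hr2]; ring
    have hp4 : p^4 = (a+b)^2 := by rw [← hp2]; ring
    have hq4 : q^4 = (b+c)^2 := by rw [← hq2]; ring
    have hr4 : r^4 = (c+a)^2 := by rw [← hr2]; ring
    have hM3 : a^2+b^2+c^2+a*b+b*c+c*a = (p^4+q^4+r^4)/2 := by
      rw [hp4, hq4, hr4]; ring
    rw [habc, hM3]
    linarith [key]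
  have h0 : 0 ≤ 2*((a+b+c)*s) := by positivity
  have h1' : 0 ≤ (p+q+r)*M := by positivity
  nlinarith [hgoal2, h0, h1']
end

section
/- For positive reals a, b, c, a^2 b/(a+b)^3 + a c^2/(a+c)^3 + b^2 c/(b+c)^3 ≤ 3/8. -/
lemma helper (x y z : ℝ) (hz : -1 ≤ z) (hz0 : z ≤ 0) (hx : 0 ≤ x) (hy : 0 ≤ y) :
    0 ≤ x^2*(1+x) + y^2*(1+y) + z^2*(1+z) + x*y*z := by
  nlinarith [sq_nonneg (x-y), mul_nonneg (mul_nonneg hx hy) (by linarith : (0:ℝ) ≤ 1+z),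
    mul_nonneg (sq_nonneg z) (by linarith : (0:ℝ) ≤ 1+z),
    mul_nonneg (sq_nonneg x) hx, mul_nonneg (sq_nonneg y) hy, mul_nonneg hx hy]

lemma aux_s19 (x y z : ℝ) (hx : -1 < x) (hy : -1 < y) (hz : -1 < z)
    (h : x + y + z + x*y*z = 0) :
    0 ≤ x^2*(1+x) + y^2*(1+y) + z^2*(1+z) + x*y*z := by
  rcases le_or_gt 0 (x*y*z) with hp | hn
  · have h1 : 0 ≤ x^2*(1+x) := by nlinarith [sq_nonneg x]
    have h2 : 0 ≤ y^2*(1+y) := by nlinarith [sq_nonneg y]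
    have h3 : 0 ≤ z^2*(1+z) := by nlinarith [sq_nonneg z]
    linarith
  · rcases le_or_gt 0 x with hx0 | hx0 <;> rcases le_or_gt 0 y with hy0 | hy0 <;>
      rcases le_or_gt 0 z with hz0 | hz0
    · nlinarith [mul_nonneg (mul_nonneg hx0 hy0) hz0]
    · exact helper x y z hz.le hz0.le hx0 hy0
    · have := helper z x y hy.le hy0.le hz0 hx0
      linarith
    · nlinarith [mul_nonneg (mul_nonneg hx0 (neg_nonneg.2 hy0.le)) (neg_nonneg.2 hz0.le)]
    · have := helper y z x hx.le hx0.le hy0 hz0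
      linarith
    · nlinarith [mul_nonneg (mul_nonneg (neg_nonneg.2 hx0.le) hy0) (neg_nonneg.2 hz0.le)]
    · nlinarith [mul_nonneg (mul_nonneg (neg_nonneg.2 hx0.le) (neg_nonneg.2 hy0.le)) hz0]
    · linarith [mul_pos (mul_pos_of_neg_of_neg hx0 hy0) (neg_pos.2 hz0), h]

theorem stmt_19 (a b c : ℝ) (ha : 0 < a) (hb : 0 < b) (hc : 0 < c) :
    a^2*b/(a+b)^3 + a*c^2/(a+c)^3 + b^2*c/(b+c)^3 ≤ 3/8 := by
  have hab : (0:ℝ) < a + b := by linarith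
  have hbc : (0:ℝ) < b + c := by linarith
  have hca : (0:ℝ) < c + a := by linarith
  set x := (a-b)/(a+b) with hxdef
  set y := (b-c)/(b+c) with hydef
  set z := (c-a)/(c+a) with hzdef
  have hx : -1 < x := by rw [hxdef, lt_div_iff₀ hab]; linarith
  have hy : -1 < y := by rw [hydef, lt_div_iff₀ hbc]; linarith
  have hz : -1 < z := by rw [hzdef, lt_div_iff₀ hca]; linarith
  have hcon : x + y + z + x*y*z = 0 := by
    rw [hxdef, hydef, hzdef]; field_simp; ring
  have hkey := aux_s19 x y z hx hy hz hcon
  have heq : a^2*b/(a+b)^3 + a*c^2/(a+c)^3 + b^2*c/(b+c)^3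
      = 3/8 + (x + y + z + x*y*z)/8 - (x^2*(1+x) + y^2*(1+y) + z^2*(1+z) + x*y*z)/8 := by
    rw [hxdef, hydef, hzdef]
    have h1 : a + c = c + a := by ring
    rw [h1]
    field_simp
    ring
  rw [heq, hcon]
  linarith
end
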